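/- arXiv:1406.6983 — 4 statements merged into one kernel-verified Lean document; each statement's English description precedes it below -/
import Mathlib

section
/- Let Ω ⊂ ℝⁿ be an open convex domain containing the origin and let h : ℝⁿ → ℝ be a supporting functional for Ω (i.e., h(a) = 1 for some a ∈ ∂Ω and h(x) < 1 for all x ∈ Ω). Then for all x, y ∈ Ω with h(x) ≠ h(y), F_Ω(x,y) ≥ log((1−h(x))/(1−h(y))). -/
open Real Set
open scoped Classical

/-- The Funk weak metric on a domain `Ω ⊆ ℝⁿ`: if the ray from `x` through `y`
meets the boundary `∂Ω` at a point `a = x + t • (y - x)` with `t ≥ 1`, then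
`F_Ω(x,y) = log (|x - a| / |y - a|)`; otherwise (in particular if the ray is
contained in `Ω`, or if `x = y`) it is `0`. -/
noncomputable def funk {n : ℕ} (Ω : Set (EuclideanSpace ℝ (Fin n)))
    (x y : EuclideanSpace ℝ (Fin n)) : ℝ :=
  if h : ∃ t : ℝ, 1 ≤ t ∧ x + t • (y - x) ∈ frontier Ω then
    Real.log (dist x (x + h.choose • (y - x)) / dist y (x + h.choose • (y - x)))
  else 0

/-!
Put `a = x + t • (y - x)`. If the ray from `x` through `y` leaves `Ω` at `a` (`t > 1`), then
`F_Ω(x,y) = log (t / (t - 1))`, and `h a ≤ 1` says `h x + t (h y - h x) ≤ 1`, which rearranges to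
`(1 - h x) / (1 - h y) ≤ t / (t - 1)`. If the ray never meets `∂Ω`, then `h` cannot increase along
it: otherwise it reaches the level `h = 1`, outside `Ω`, and the connected piece of ray from `y`
to that point would cross `∂Ω`. So `h y < h x` and the left-hand side is negative.
-/

theorem IsPreconnected.inter_frontier_nonempty {X : Type*} [TopologicalSpace X] {s u : Set X}
    (hs : IsPreconnected s) (hsu : (s ∩ u).Nonempty) (hsu' : (s \ u).Nonempty) :
    (s ∩ frontier u).Nonempty := by
  by_contra hfr
  have hcover : s ⊆ interior u ∪ (closure u)ᶜ := fun z hz => by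
    by_contra hz'
    simp only [mem_union, mem_compl_iff, not_or, not_not] at hz'
    exact hfr ⟨z, hz, hz'.2, hz'.1⟩
  have hdisj : Disjoint (interior u) (closure u)ᶜ :=
    disjoint_compl_right_iff_subset.2 (interior_subset.trans subset_closure)
  rcases hs.subset_or_subset isOpen_interior isClosed_closure.isOpen_compl hdisj hcover
    with hint | hext
  · obtain ⟨z, hzs, hzu⟩ := hsu'
    exact hzu (interior_subset (hint hzs))
  · obtain ⟨z, hzs, hzu⟩ := hsu
    exact hext hzs (subset_closure hzu)

theorem exists_one_le_add_smul_sub_mem_frontier {E : Type*} [AddCommGroup E] [Module ℝ E]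
    [TopologicalSpace E] [ContinuousAdd E] [ContinuousSMul ℝ E] {Ω : Set E} {h : E →ₗ[ℝ] ℝ}
    (hlt : ∀ z ∈ Ω, h z < 1) {x y : E} (hy : y ∈ Ω) (hxy : h x < h y) :
    ∃ t : ℝ, 1 ≤ t ∧ x + t • (y - x) ∈ frontier Ω := by
  set ray : ℝ → E := fun t => x + t • (y - x)
  have hray : ∀ t, h (ray t) = h x + t * (h y - h x) := fun t => by
    simp only [ray, map_add, map_smul, map_sub, smul_eq_mul]
  -- `T` is where `h` reaches the level `1` along the ray.
  set T := (1 - h x) / (h y - h x)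
  have hT : 1 ≤ T := (one_le_div (sub_pos.2 hxy)).2 (by linarith [hlt y hy])
  have hrayT : ray T ∉ Ω := fun hT' => by
    have : h (ray T) = 1 := by
      rw [hray, div_mul_cancel₀ _ (sub_pos.2 hxy).ne']
      ring
    exact (hlt _ hT').ne this
  have hconn : IsPreconnected (ray '' Icc 1 T) :=
    isPreconnected_Icc.image ray (by fun_prop)
  have hin : (ray '' Icc 1 T ∩ Ω).Nonempty :=
    ⟨y, ⟨1, left_mem_Icc.2 hT, by simp [ray]⟩, hy⟩
  have hout : (ray '' Icc 1 T \ Ω).Nonempty := ⟨ray T, mem_image_of_mem ray (right_mem_Icc.2 hT), hrayT⟩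
  obtain ⟨_, ⟨t, ht, rfl⟩, hfr⟩ := hconn.inter_frontier_nonempty hin hout
  exact ⟨t, ht.1, hfr⟩

theorem dist_div_dist_add_smul_sub {E : Type*} [NormedAddCommGroup E] [NormedSpace ℝ E]
    {x y : E} (hxy : x ≠ y) {t : ℝ} (ht : 1 < t) :
    dist x (x + t • (y - x)) / dist y (x + t • (y - x)) = t / (t - 1) := by
  have hx : dist x (x + t • (y - x)) = t * ‖y - x‖ := by
    rw [dist_eq_norm, sub_add_cancel_left, norm_neg, norm_smul, norm_of_nonneg (by linarith)]
  have hy : dist y (x + t • (y - x)) = (t - 1) * ‖y - x‖ := by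
    rw [dist_eq_norm, show y - (x + t • (y - x)) = -((t - 1) • (y - x)) by module, norm_neg,
      norm_smul, norm_of_nonneg (by linarith)]
  rw [hx, hy, mul_div_mul_right _ _ (norm_pos_iff.2 (sub_ne_zero.2 hxy.symm)).ne']

theorem one_sub_div_one_sub_le_div_sub_one {a b t : ℝ} (hb : b < 1) (ht : 1 < t)
    (hline : a + t * (b - a) ≤ 1) : (1 - a) / (1 - b) ≤ t / (t - 1) := by
  rw [div_le_div_iff₀ (by linarith) (by linarith)]
  linarith

theorem funk_ge_log_supporting_functional_general {n : ℕ} (Ω : Set (EuclideanSpace ℝ (Fin n)))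
    (hopen : IsOpen Ω)
    (h : EuclideanSpace ℝ (Fin n) →ₗ[ℝ] ℝ)
    (hlt : ∀ z ∈ Ω, h z < 1)
    (x y : EuclideanSpace ℝ (Fin n)) (hx : x ∈ Ω) (hy : y ∈ Ω) (hne' : h x ≠ h y) :
    Real.log ((1 - h x) / (1 - h y)) ≤ funk Ω x y := by
  have hxlt := hlt x hx
  have hylt := hlt y hy
  rw [funk]
  split_ifs with hray
  · obtain ⟨ht1, hfr⟩ := hray.choose_spec
    set t := hray.choose
    have hout : x + t • (y - x) ∉ Ω := fun hin => hopen.inter_frontier_eq.subset ⟨hin, hfr⟩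
    have ht : 1 < t := ht1.lt_of_ne <| by
      intro h1
      rw [← h1, one_smul, add_sub_cancel] at hout
      exact hout hy
    have hle : h (x + t • (y - x)) ≤ 1 :=
      closure_minimal (fun z hz => (hlt z hz).le)
        (isClosed_le h.continuous_of_finiteDimensional continuous_const) hfr.1
    simp only [map_add, map_smul, map_sub, smul_eq_mul] at hle
    rw [dist_div_dist_add_smul_sub (fun e => hne' (congrArg h e)) ht]
    exact log_le_log (div_pos (by linarith) (by linarith))
      (one_sub_div_one_sub_le_div_sub_one hylt ht hle)
  · have hyx : h y < h x := (lt_or_gt_of_ne hne').resolve_left fun hxy =>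
      hray (exists_one_le_add_smul_sub_mem_frontier hlt hy hxy)
    exact log_nonpos (div_nonneg (by linarith) (by linarith)) ((div_le_one (by linarith)).2
      (by linarith))

theorem funk_ge_log_supporting_functional {n : ℕ} (Ω : Set (EuclideanSpace ℝ (Fin n)))
    (hopen : IsOpen Ω) (hconv : Convex ℝ Ω) (h0 : (0 : EuclideanSpace ℝ (Fin n)) ∈ Ω)
    (h : EuclideanSpace ℝ (Fin n) →ₗ[ℝ] ℝ)
    (hsupp : ∃ a ∈ frontier Ω, h a = 1) (hlt : ∀ z ∈ Ω, h z < 1)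
    (x y : EuclideanSpace ℝ (Fin n)) (hx : x ∈ Ω) (hy : y ∈ Ω) (hne' : h x ≠ h y) :
    Real.log ((1 - h x) / (1 - h y)) ≤ funk Ω x y :=
  funk_ge_log_supporting_functional_general Ω hopen h hlt x y hx hy hne'
end

section
/- For a bounded open convex domain Ω ⊂ ℝⁿ containing the origin, the Funk metric satisfies F_Ω(x,y) = sup over supporting functionals h of log((1−h(x))/(1−h(y))). -/
/-!
Write `a = x + t • (y - x)`, `t > 1`, for the point where the ray from `x` through `y` leaves `Ω`;
by convexity it is the only boundary point on that ray, so `F_Ω(x, y) = log (t / (t - 1))`.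
For a linear `h` with `h < 1` on `Ω`, the inequality `h a ≤ 1` rearranges to
`(1 - h x) / (1 - h y) ≤ t / (t - 1)`, with equality exactly when `h a = 1`; a functional
supporting `Ω` at `a` exists by Hahn–Banach, normalised to `h a = 1` because `0 ∈ Ω`.
-/

open Real
open scoped Classical

section

variable {E : Type*} [NormedAddCommGroup E] [NormedSpace ℝ E] {Ω : Set E} {x c : E}

lemma Bornology.IsBounded.bddAbove_add_smul_mem (hΩ : Bornology.IsBounded Ω) (hc : c ≠ 0) :
    BddAbove {t : ℝ | x + t • c ∈ Ω} := by
  have hanti : AntilipschitzWith ‖c‖₊⁻¹ (fun t : ℝ => x + t • c) :=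
    AntilipschitzWith.of_le_mul_dist fun s t => by
      rw [dist_add_left, dist_eq_norm (s • c), ← sub_smul, norm_smul, ← dist_eq_norm,
        NNReal.coe_inv, coe_nnnorm, mul_comm (dist s t),
        inv_mul_cancel_left₀ (norm_ne_zero_iff.2 hc)]
  exact (hanti.isBounded_preimage hΩ).bddAbove

lemma IsOpen.exists_one_lt_add_smul_mem_frontier (hopen : IsOpen Ω)
    (hbdd : Bornology.IsBounded Ω) (hc : c ≠ 0) (h1 : x + c ∈ Ω) :
    ∃ t : ℝ, 1 < t ∧ x + t • c ∈ frontier Ω := by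
  set S := {t : ℝ | x + t • c ∈ Ω}
  have hcont : Continuous fun t : ℝ => x + t • c := by fun_prop
  have hS1 : (1 : ℝ) ∈ S := by simpa [S] using h1
  have hSbdd : BddAbove S := hbdd.bddAbove_add_smul_mem hc
  have hnotS : sSup S ∉ S := fun hmem => by
    obtain ⟨t, hlt, htS⟩ :=
      ((frequently_gt_nhds (sSup S)).and_eventually ((hopen.preimage hcont).mem_nhds hmem)).exists
    exact (le_csSup hSbdd htS).not_gt hlt
  have hclosure : x + sSup S • c ∈ closure Ω :=
    map_mem_closure (f := fun t : ℝ => x + t • c) hcont (csSup_mem_closure ⟨1, hS1⟩ hSbdd)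
      fun t ht => ht
  refine ⟨sSup S, (le_csSup hSbdd hS1).lt_of_ne fun h => hnotS (h ▸ hS1), hclosure, ?_⟩
  rwa [hopen.interior_eq]

lemma Convex.add_smul_mem_of_lt_of_mem_closure (hconv : Convex ℝ Ω) (hopen : IsOpen Ω)
    (hx : x ∈ Ω) {s t : ℝ} (hs : 0 < s) (hst : s < t) (htΩ : x + t • c ∈ closure Ω) :
    x + s • c ∈ Ω := by
  have hseg : x + s • c ∈ openSegment ℝ x (x + t • c) := by
    rw [openSegment_eq_image']
    have ht : 0 < t := hs.trans hst
    refine ⟨s / t, ⟨div_pos hs ht, (div_lt_one ht).2 hst⟩, ?_⟩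
    simp only [add_sub_cancel_left, smul_smul, div_mul_cancel₀ _ ht.ne']
  rw [← hopen.interior_eq] at hx ⊢
  exact hconv.openSegment_interior_closure_subset_interior hx htΩ hseg

lemma Convex.eq_of_add_smul_mem_frontier (hconv : Convex ℝ Ω) (hopen : IsOpen Ω) (hx : x ∈ Ω)
    {s t : ℝ} (hs : 0 < s) (ht : 0 < t) (hsΩ : x + s • c ∈ frontier Ω)
    (htΩ : x + t • c ∈ frontier Ω) : s = t := by
  have key : ∀ {s t : ℝ}, 0 < s → s < t → x + s • c ∈ frontier Ω → x + t • c ∈ frontier Ω →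
      False := fun hs hst hsΩ htΩ =>
    (disjoint_frontier_iff_isOpen.2 hopen).notMem_of_mem_left hsΩ
      (hconv.add_smul_mem_of_lt_of_mem_closure hopen hx hs hst (frontier_subset_closure htΩ))
  rcases lt_trichotomy s t with hst | rfl | hts
  · exact (key hs hst hsΩ htΩ).elim
  · rfl
  · exact (key ht hts htΩ hsΩ).elim

end

lemma one_sub_div_one_sub_le_iff {u v t : ℝ} (hv : v < 1) (ht : 1 < t) :
    (1 - u) / (1 - v) ≤ t / (t - 1) ↔ u + t * (v - u) ≤ 1 := by
  rw [div_le_div_iff₀ (by linarith) (by linarith)]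
  constructor <;> intro h <;> linarith

lemma one_sub_div_one_sub_eq_iff {u v t : ℝ} (hv : v < 1) (ht : 1 < t) :
    (1 - u) / (1 - v) = t / (t - 1) ↔ u + t * (v - u) = 1 := by
  rw [div_eq_div_iff (by linarith) (by linarith)]
  constructor <;> intro h <;> linarith

section

variable {n : ℕ} {Ω : Set (EuclideanSpace ℝ (Fin n))} {x y : EuclideanSpace ℝ (Fin n)}

@[simp]
lemma funk_self : funk Ω x x = 0 := by
  simp [funk]

lemma funk_eq_log (hopen : IsOpen Ω) (hconv : Convex ℝ Ω) (hx : x ∈ Ω) {t : ℝ} (ht : 1 < t)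
    (ha : x + t • (y - x) ∈ frontier Ω) : funk Ω x y = log (t / (t - 1)) := by
  have hex : ∃ s : ℝ, 1 ≤ s ∧ x + s • (y - x) ∈ frontier Ω := ⟨t, ht.le, ha⟩
  have hchoose : hex.choose = t :=
    hconv.eq_of_add_smul_mem_frontier hopen hx (by linarith [hex.choose_spec.1]) (by linarith)
      hex.choose_spec.2 ha
  have hyx : y - x ≠ 0 := by
    rintro hyx
    rw [hyx, smul_zero, add_zero] at ha
    exact (disjoint_frontier_iff_isOpen.2 hopen).notMem_of_mem_left ha hx
  have hdx : dist x (x + t • (y - x)) = t * ‖y - x‖ := by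
    rw [dist_self_add_right, norm_smul, norm_of_nonneg (by linarith)]
  have hdy : dist y (x + t • (y - x)) = (t - 1) * ‖y - x‖ := by
    rw [dist_eq_norm', show x + t • (y - x) - y = (t - 1) • (y - x) by module, norm_smul,
      norm_of_nonneg (by linarith)]
  rw [funk, dif_pos hex, hchoose, hdx, hdy, mul_div_mul_right _ _ (norm_ne_zero_iff.2 hyx)]

end

theorem funk_eq_sup_supporting_functionals {n : ℕ} (Ω : Set (EuclideanSpace ℝ (Fin n)))
    (hopen : IsOpen Ω) (hconv : Convex ℝ Ω) (h0 : (0 : EuclideanSpace ℝ (Fin n)) ∈ Ω)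
    (hbdd : Bornology.IsBounded Ω)
    (x y : EuclideanSpace ℝ (Fin n)) (hx : x ∈ Ω) (hy : y ∈ Ω) :
    funk Ω x y = sSup {r : ℝ | ∃ h : EuclideanSpace ℝ (Fin n) →ₗ[ℝ] ℝ,
      (∀ z ∈ Ω, h z < 1) ∧ (∃ a ∈ frontier Ω, h a = 1) ∧
      r = Real.log ((1 - h x) / (1 - h y))} := by
  rcases eq_or_ne x y with rfl | hxy
  · rw [funk_self]
    refine le_antisymm (Real.sSup_nonneg ?_) (Real.sSup_nonpos ?_) <;>
      rintro r ⟨h, hlt, -, rfl⟩ <;> rw [div_self (sub_ne_zero.2 (hlt x hx).ne'), log_one]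
  obtain ⟨t, ht, ha⟩ := hopen.exists_one_lt_add_smul_mem_frontier hbdd (sub_ne_zero.2 hxy.symm)
    (by rwa [add_sub_cancel])
  rw [funk_eq_log hopen hconv hx ht ha]
  refine (IsGreatest.csSup_eq ⟨?_, ?_⟩).symm
  · obtain ⟨h, hha, hlt⟩ := separate_convex_open_set h0 hconv hopen
      ((disjoint_frontier_iff_isOpen.2 hopen).notMem_of_mem_left ha)
    refine ⟨h, hlt, ⟨_, ha, hha⟩, ?_⟩
    rw [ContinuousLinearMap.coe_coe,
      (one_sub_div_one_sub_eq_iff (hlt y hy) ht).2 (by simpa using hha)]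
  · rintro r ⟨h, hlt, -, rfl⟩
    have hle : h (x + t • (y - x)) ≤ 1 :=
      closure_lt_subset_le h.continuous_of_finiteDimensional continuous_const
        (closure_mono hlt (frontier_subset_closure ha))
    exact log_le_log (div_pos (sub_pos.2 (hlt x hx)) (sub_pos.2 (hlt y hy)))
      ((one_sub_div_one_sub_le_iff (hlt y hy) ht).2 (by simpa using hle))
end

section
/- For the positive orthant Ω = ℝ₊ⁿ = {x : xᵢ > 0 for all i}, the Funk metric is given by F_Ω(x,y) = max over 1 ≤ i ≤ n of max{0, log(xᵢ/yᵢ)}. -/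
open Real
open scoped Classical

/-!
On the ray `t ↦ x + t • (y - x)` the `i`-th coordinate is
`(t - 1) * y i * (t / (t - 1) - x i / y i)`, so for `t > 1` the ray meets the boundary of the
orthant exactly when `t / (t - 1)` equals the largest ratio `x i / y i`; and `t / (t - 1)` is
also the ratio `|x - a| / |y - a|` at that boundary point `a`. If no ratio exceeds `1`, the ray
never leaves the orthant.
-/

section Ray

variable {E : Type*}

lemma one_lt_of_ray_mem_frontier [AddCommGroup E] [Module ℝ E] [TopologicalSpace E] {Ω : Set E}
    (hΩ : IsOpen Ω) {x y : E} (hy : y ∈ Ω) {t : ℝ} (ht : 1 ≤ t)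
    (h : x + t • (y - x) ∈ frontier Ω) : 1 < t := by
  refine ht.lt_of_ne ?_
  rintro rfl
  rw [one_smul, add_sub_cancel] at h
  exact hΩ.inter_frontier_eq.subset ⟨hy, h⟩

lemma dist_div_dist_ray [NormedAddCommGroup E] [NormedSpace ℝ E] {x y : E} (hxy : x ≠ y) (t : ℝ) :
    dist x (x + t • (y - x)) / dist y (x + t • (y - x)) = |t| / |t - 1| := by
  have hy : x + t • (y - x) - y = (t - 1) • (y - x) := by
    rw [sub_smul, one_smul]; abel
  rw [dist_self_add_right, dist_comm, dist_eq_norm, hy, norm_smul, norm_smul,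
    mul_div_mul_right _ _ (norm_ne_zero_iff.mpr (sub_ne_zero.mpr hxy.symm)), Real.norm_eq_abs,
    Real.norm_eq_abs]

end Ray

lemma funk_eq_log_of_exists {n : ℕ} {Ω : Set (EuclideanSpace ℝ (Fin n))} (hΩ : IsOpen Ω)
    {x y : EuclideanSpace ℝ (Fin n)} (hx : x ∈ Ω)
    (h : ∃ t : ℝ, 1 ≤ t ∧ x + t • (y - x) ∈ frontier Ω) :
    funk Ω x y = Real.log (h.choose / (h.choose - 1)) := by
  have hxy : x ≠ y := by
    obtain ⟨t, -, hmem⟩ := h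
    rintro rfl
    rw [sub_self, smul_zero, add_zero] at hmem
    exact hΩ.inter_frontier_eq.subset ⟨hx, hmem⟩
  have ht := h.choose_spec.1
  rw [funk, dif_pos h, dist_div_dist_ray hxy, abs_of_nonneg (by linarith),
    abs_of_nonneg (by linarith)]

lemma iSup_max_zero_log_of_isGreatest {ι : Type*} [Finite ι] {r : ι → ℝ} (hr : ∀ i, 0 < r i)
    {m : ℝ} (hm : IsGreatest (Set.range r) m) :
    ⨆ i, max 0 (Real.log (r i)) = max 0 (Real.log m) := by
  obtain ⟨⟨j, rfl⟩, hub⟩ := hm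
  have : Nonempty ι := ⟨j⟩
  refine le_antisymm (ciSup_le fun i => ?_) ?_
  · exact max_le_max le_rfl (Real.log_le_log (hr i) (hub ⟨i, rfl⟩))
  · exact le_ciSup (f := fun i => max 0 (Real.log (r i))) (Set.finite_range _).bddAbove j

def posOrthant (n : ℕ) : Set (EuclideanSpace ℝ (Fin n)) := {z | ∀ i, 0 < z i}

namespace posOrthant

variable {n : ℕ}

lemma eq_preimage_pi : posOrthant n = PiLp.homeomorph 2 _ ⁻¹' Set.univ.pi fun _ => Set.Ioi 0 := by
  ext z
  simp [posOrthant, PiLp.homeomorph]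

lemma isOpen : IsOpen (posOrthant n) := by
  rw [eq_preimage_pi]
  exact (isOpen_set_pi Set.finite_univ fun _ _ => isOpen_Ioi).preimage
    (PiLp.homeomorph 2 _).continuous

lemma mem_frontier_iff (p : EuclideanSpace ℝ (Fin n)) :
    p ∈ frontier (posOrthant n) ↔ (∀ i, 0 ≤ p i) ∧ ¬ ∀ i, 0 < p i := by
  rw [eq_preimage_pi, ← Homeomorph.preimage_frontier, frontier, closure_pi_set,
    interior_pi_set Set.finite_univ]
  simp [PiLp.homeomorph, Pi.le_def]

lemma ray_apply_eq {x y : EuclideanSpace ℝ (Fin n)} (hy : y ∈ posOrthant n) {t : ℝ} (ht : 1 < t)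
    (i : Fin n) :
    (x + t • (y - x)) i = (t - 1) * y i * (t / (t - 1) - x i / y i) := by
  have hyi : y i ≠ 0 := (hy i).ne'
  have ht1 : t - 1 ≠ 0 := by linarith
  simp only [PiLp.add_apply, PiLp.smul_apply, PiLp.sub_apply, smul_eq_mul]
  field_simp
  ring

lemma ray_mem_frontier_iff {x y : EuclideanSpace ℝ (Fin n)} (hy : y ∈ posOrthant n) {t : ℝ}
    (ht : 1 < t) :
    x + t • (y - x) ∈ frontier (posOrthant n) ↔
      IsGreatest (Set.range fun i => x i / y i) (t / (t - 1)) := by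
  have hpos : ∀ i, 0 < (t - 1) * y i := fun i => mul_pos (by linarith) (hy i)
  simp only [mem_frontier_iff, ray_apply_eq hy ht, mul_nonneg_iff_of_pos_left (hpos _),
    mul_pos_iff_of_pos_left (hpos _), sub_nonneg, sub_pos, IsGreatest, mem_upperBounds,
    Set.mem_range, forall_exists_index, forall_apply_eq_imp_iff, not_forall, not_lt]
  constructor
  · rintro ⟨hle, i, hi⟩
    exact ⟨⟨i, (hle i).antisymm hi⟩, hle⟩
  · rintro ⟨⟨i, hi⟩, hle⟩
    exact ⟨hle, i, hi.ge⟩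

lemma exists_ray_mem_frontier {x y : EuclideanSpace ℝ (Fin n)} (hy : y ∈ posOrthant n) {j : Fin n}
    (hj : y j < x j) : ∃ t : ℝ, 1 ≤ t ∧ x + t • (y - x) ∈ frontier (posOrthant n) := by
  have : Nonempty (Fin n) := ⟨j⟩
  obtain ⟨i, hi⟩ := Finite.exists_max fun i => x i / y i
  set m := x i / y i
  have hm : 1 < m := ((one_lt_div (hy j)).mpr hj).trans_le (hi j)
  have hm' : m - 1 ≠ 0 := by linarith
  have ht : 1 < m / (m - 1) := (one_lt_div (by linarith)).mpr (by linarith)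
  refine ⟨m / (m - 1), ht.le, (ray_mem_frontier_iff hy ht).mpr ?_⟩
  have hratio : m / (m - 1) / (m / (m - 1) - 1) = m := by
    field_simp
    ring
  rw [hratio]
  exact ⟨⟨i, rfl⟩, Set.forall_mem_range.mpr hi⟩

end posOrthant

theorem funk_positive_orthant {n : ℕ}
    (x y : EuclideanSpace ℝ (Fin n))
    (hx : x ∈ {z : EuclideanSpace ℝ (Fin n) | ∀ i, 0 < z i})
    (hy : y ∈ {z : EuclideanSpace ℝ (Fin n) | ∀ i, 0 < z i}) :
    funk {z : EuclideanSpace ℝ (Fin n) | ∀ i, 0 < z i} x y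
      = ⨆ i : Fin n, max 0 (Real.log (x i / y i)) := by
  change funk (posOrthant n) x y = _
  have hr : ∀ i, 0 < x i / y i := fun i => div_pos (hx i) (hy i)
  by_cases h : ∃ t : ℝ, 1 ≤ t ∧ x + t • (y - x) ∈ frontier (posOrthant n)
  · obtain ⟨ht, hmem⟩ := h.choose_spec
    have ht' := one_lt_of_ray_mem_frontier posOrthant.isOpen hy ht hmem
    have hm := (posOrthant.ray_mem_frontier_iff hy ht').mp hmem
    have hm1 : 1 ≤ h.choose / (h.choose - 1) := (one_le_div (by linarith)).mpr (by linarith)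
    rw [funk_eq_log_of_exists posOrthant.isOpen hx h, iSup_max_zero_log_of_isGreatest hr hm,
      max_eq_right (Real.log_nonneg hm1)]
  · have hle : ∀ i, x i ≤ y i := fun i =>
      not_lt.mp fun hi => h (posOrthant.exists_ray_mem_frontier hy hi)
    have hzero : ∀ i, max 0 (Real.log (x i / y i)) = 0 := fun i =>
      max_eq_left (Real.log_nonpos (hr i).le ((div_le_one (hy i)).mpr (hle i)))
    rw [funk, dif_neg h]
    simp only [hzero, Real.iSup_const_zero]
end

section
/- Let B ⊂ ℝⁿ be the open Euclidean unit ball. For x ≠ y in B, the Funk metric is F_B(x,y) = log((√(|y−x|² − |x∧y|²) + |x|² − ⟨x,y⟩) / (√(|y−x|² − |x∧y|²) − |y|² + ⟨x,y⟩)), where |x∧y|² = |x|²|y|² − ⟨x,y⟩². -/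
/-!
The ray `t ↦ x + t • (y - x)` leaves the unit ball when `‖x + t • (y - x)‖² = 1`, a quadratic
equation in `t` with positive leading coefficient `‖y - x‖²`, whose value is negative at `t = 0`
and at `t = 1` since `x` and `y` lie in the ball. Hence it has exactly one root `t₀ > 1`, and the
boundary point `a = x + t₀ • (y - x)` gives `|x - a| / |y - a| = t₀ / (t₀ - 1)`. The reduced
discriminant `⟪x, y - x⟫² - ‖y - x‖² (‖x‖² - 1)` of the quadratic equals `|y - x|² - |x ∧ y|²`.
-/

open Real
open scoped Classical

open scoped RealInnerProductSpace

theorem eq_of_quadratic_eq_zero_of_pos {a b c t : ℝ} (ha : 0 < a) (hc : c < 0) (ht : 0 < t)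
    (h : a * t ^ 2 + 2 * b * t + c = 0) : t = (√(b ^ 2 - a * c) - b) / a := by
  have hsq : (a * t + b) ^ 2 = b ^ 2 - a * c := by linear_combination a * h
  -- `t * (a * t + 2 * b) = -c > 0`, so `a * t + 2 * b > 0` and a fortiori `a * t + b > 0`.
  have hpos : 0 < a * t + b := by nlinarith
  rw [eq_div_iff ha.ne', ← hsq, sqrt_sq hpos.le]
  ring

theorem quadratic_eq_zero_of_eq {a b c t : ℝ} (ha : 0 < a) (hc : c ≤ 0)
    (ht : t = (√(b ^ 2 - a * c) - b) / a) : a * t ^ 2 + 2 * b * t + c = 0 := by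
  have hs : √(b ^ 2 - a * c) ^ 2 = b ^ 2 - a * c := sq_sqrt (by nlinarith [sq_nonneg b])
  subst ht
  field_simp
  linear_combination hs

section UnitSphere

variable {E : Type*} [NormedAddCommGroup E] [InnerProductSpace ℝ E]

theorem norm_add_smul_sub_sq (x y : E) (t : ℝ) :
    ‖x + t • (y - x)‖ ^ 2 = ‖y - x‖ ^ 2 * t ^ 2 + 2 * (⟪x, y⟫ - ‖x‖ ^ 2) * t + ‖x‖ ^ 2 := by
  rw [norm_add_sq_real, real_inner_smul_right, inner_sub_right, real_inner_self_eq_norm_sq,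
    norm_smul, Real.norm_eq_abs, mul_pow, sq_abs]
  ring

theorem norm_sub_sq_sub_wedge_sq (x y : E) :
    ‖y - x‖ ^ 2 - (‖x‖ ^ 2 * ‖y‖ ^ 2 - ⟪x, y⟫ ^ 2)
      = (⟪x, y⟫ - ‖x‖ ^ 2) ^ 2 - ‖y - x‖ ^ 2 * (‖x‖ ^ 2 - 1) := by
  rw [norm_sub_sq_real, real_inner_comm y x]
  ring

noncomputable def unitBallExitTime (x y : E) : ℝ :=
  (√(‖y - x‖ ^ 2 - (‖x‖ ^ 2 * ‖y‖ ^ 2 - ⟪x, y⟫ ^ 2)) + ‖x‖ ^ 2 - ⟪x, y⟫) / ‖y - x‖ ^ 2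

theorem norm_add_smul_sub_eq_one_iff {x y : E} (hx : ‖x‖ < 1) (hxy : x ≠ y) {t : ℝ}
    (ht : 0 < t) : ‖x + t • (y - x)‖ = 1 ↔ t = unitBallExitTime x y := by
  have hc : 0 < ‖y - x‖ ^ 2 := pow_pos (norm_pos_iff.2 (sub_ne_zero.2 hxy.symm)) 2
  have he : ‖x‖ ^ 2 - 1 < 0 := by nlinarith [norm_nonneg x]
  have hroot : t = unitBallExitTime x y ↔
      t = (√((⟪x, y⟫ - ‖x‖ ^ 2) ^ 2 - ‖y - x‖ ^ 2 * (‖x‖ ^ 2 - 1)) - (⟪x, y⟫ - ‖x‖ ^ 2))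
        / ‖y - x‖ ^ 2 := by
    rw [unitBallExitTime, norm_sub_sq_sub_wedge_sq, sub_sub_eq_add_sub]
  rw [hroot, ← pow_eq_one_iff_of_nonneg (norm_nonneg _) two_ne_zero, norm_add_smul_sub_sq,
    ← sub_eq_zero, add_sub_assoc]
  exact ⟨eq_of_quadratic_eq_zero_of_pos hc he ht, quadratic_eq_zero_of_eq hc he.le⟩

theorem one_lt_unitBallExitTime {x y : E} (hy : ‖y‖ < 1) (hxy : x ≠ y) :
    1 < unitBallExitTime x y := by
  have hc : 0 < ‖y - x‖ ^ 2 := pow_pos (norm_pos_iff.2 (sub_ne_zero.2 hxy.symm)) 2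
  have hdist : ‖y - x‖ ^ 2 = ‖x‖ ^ 2 + ‖y‖ ^ 2 - 2 * ⟪x, y⟫ := by
    rw [norm_sub_sq_real, real_inner_comm y x]
    ring
  -- `s² - (‖y‖² - ⟪x, y⟫)² = ‖y - x‖² (1 - ‖y‖²) > 0` for the square root `s`.
  have hs : ‖y‖ ^ 2 - ⟪x, y⟫ < √(‖y - x‖ ^ 2 - (‖x‖ ^ 2 * ‖y‖ ^ 2 - ⟪x, y⟫ ^ 2)) := by
    apply lt_sqrt_of_sq_lt
    have hyy : ‖y‖ ^ 2 < 1 := by nlinarith [norm_nonneg y]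
    nlinarith
  rw [unitBallExitTime, one_lt_div hc]
  linarith

theorem unitBallExitTime_div_sub_one (x y : E) (hxy : x ≠ y) :
    unitBallExitTime x y / (unitBallExitTime x y - 1)
      = (√(‖y - x‖ ^ 2 - (‖x‖ ^ 2 * ‖y‖ ^ 2 - ⟪x, y⟫ ^ 2)) + ‖x‖ ^ 2 - ⟪x, y⟫)
        / (√(‖y - x‖ ^ 2 - (‖x‖ ^ 2 * ‖y‖ ^ 2 - ⟪x, y⟫ ^ 2)) - ‖y‖ ^ 2 + ⟪x, y⟫) := by
  have hc : ‖y - x‖ ^ 2 ≠ 0 := pow_ne_zero 2 (norm_ne_zero_iff.2 (sub_ne_zero.2 hxy.symm))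
  have hsub : unitBallExitTime x y - 1
      = (√(‖y - x‖ ^ 2 - (‖x‖ ^ 2 * ‖y‖ ^ 2 - ⟪x, y⟫ ^ 2)) - ‖y‖ ^ 2 + ⟪x, y⟫)
        / ‖y - x‖ ^ 2 := by
    rw [unitBallExitTime, div_sub_one hc]
    congr 1
    rw [norm_sub_sq_real, real_inner_comm y x]
    ring
  rw [hsub, unitBallExitTime, div_div_div_cancel_right₀ hc]

end UnitSphere

theorem funk_eq_log_div_sub_one {n : ℕ} {Ω : Set (EuclideanSpace ℝ (Fin n))}
    {x y : EuclideanSpace ℝ (Fin n)} (hxy : x ≠ y) {t₀ : ℝ} (ht₀ : 1 < t₀)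
    (hmem : x + t₀ • (y - x) ∈ frontier Ω)
    (huniq : ∀ t, 1 ≤ t → x + t • (y - x) ∈ frontier Ω → t = t₀) :
    funk Ω x y = log (t₀ / (t₀ - 1)) := by
  have hex : ∃ t : ℝ, 1 ≤ t ∧ x + t • (y - x) ∈ frontier Ω := ⟨t₀, ht₀.le, hmem⟩
  have hchoose : hex.choose = t₀ := huniq _ hex.choose_spec.1 hex.choose_spec.2
  have hv : ‖y - x‖ ≠ 0 := norm_ne_zero_iff.2 (sub_ne_zero.2 hxy.symm)
  have hdx : dist x (x + t₀ • (y - x)) = t₀ * ‖y - x‖ := by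
    rw [dist_eq_norm, sub_add_cancel_left, norm_neg, norm_smul, norm_of_nonneg (by linarith)]
  have hdy : dist y (x + t₀ • (y - x)) = (t₀ - 1) * ‖y - x‖ := by
    rw [dist_eq_norm, show y - (x + t₀ • (y - x)) = (1 - t₀) • (y - x) by module, norm_smul,
      norm_of_nonpos (by linarith), neg_sub]
  rw [funk, dif_pos hex, hchoose, hdx, hdy, mul_div_mul_right _ _ hv]

open scoped RealInnerProductSpace in
theorem funk_unit_ball {n : ℕ}
    (x y : EuclideanSpace ℝ (Fin n))
    (hx : x ∈ Metric.ball (0 : EuclideanSpace ℝ (Fin n)) 1)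
    (hy : y ∈ Metric.ball (0 : EuclideanSpace ℝ (Fin n)) 1) (hxy : x ≠ y) :
    funk (Metric.ball (0 : EuclideanSpace ℝ (Fin n)) 1) x y
      = Real.log ((Real.sqrt (‖y - x‖ ^ 2 - (‖x‖ ^ 2 * ‖y‖ ^ 2 - ⟪x, y⟫ ^ 2))
            + ‖x‖ ^ 2 - ⟪x, y⟫)
          / (Real.sqrt (‖y - x‖ ^ 2 - (‖x‖ ^ 2 * ‖y‖ ^ 2 - ⟪x, y⟫ ^ 2))
            - ‖y‖ ^ 2 + ⟪x, y⟫)) := by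
  rw [mem_ball_zero_iff] at hx hy
  have hexit := one_lt_unitBallExitTime hy hxy
  have hmem : ∀ t : ℝ, 0 < t →
      (x + t • (y - x) ∈ frontier (Metric.ball 0 1) ↔ t = unitBallExitTime x y) := fun t ht => by
    rw [frontier_ball 0 one_ne_zero, mem_sphere_zero_iff_norm]
    exact norm_add_smul_sub_eq_one_iff hx hxy ht
  rw [funk_eq_log_div_sub_one hxy hexit ((hmem _ (by linarith)).2 rfl)
    (fun t ht h => (hmem t (by linarith)).1 h), unitBallExitTime_div_sub_one x y hxy]
end
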